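/- arXiv:2303.08242 — 4 statements merged into one kernel-verified Lean document; each statement's English description precedes it below -/
import Mathlib

section
/- Let L be a nonnegative real-valued random variable on a probability space, let q ∈ (0,1], and suppose r ≥ 0 satisfies P(L > r) = q. Then for every measurable function s : ℝ → [0,1] with E[s(L)] = q, one has E[s(L) · L] ≤ E[1_{L > r} · L]. -/
/-!
On `{L > r}` the threshold rule selects with probability `1 ≥ s`, and off it with probability
`0 ≤ s`, so pointwise `(1_{L > r} - s(L)) (L - r) ≥ 0`. Integrating, the `r`-terms cancel because
both rules have the same selection rate, leaving `E[s(L) L] ≤ E[1_{L > r} L]`.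
-/

open MeasureTheory Set

theorem mul_sub_le_ite_sub {x l r : ℝ} (hx : x ∈ Icc (0 : ℝ) 1) :
    x * (l - r) ≤ if r < l then l - r else 0 := by
  obtain ⟨hx0, hx1⟩ := hx
  split_ifs with h
  · nlinarith
  · nlinarith [not_lt.mp h]

theorem integral_mul_le_setIntegral_of_integral_eq {Ω : Type*} [MeasurableSpace Ω]
    {μ : Measure Ω} [IsFiniteMeasure μ] {L g : Ω → ℝ} (hLmeas : Measurable L)
    (hL : Integrable L μ) (hg : AEStronglyMeasurable g μ) (hg01 : ∀ ω, g ω ∈ Icc (0 : ℝ) 1)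
    {r : ℝ} (hrate : ∫ ω, g ω ∂μ = μ.real {ω | r < L ω}) :
    ∫ ω, g ω * L ω ∂μ ≤ ∫ ω in {ω | r < L ω}, L ω ∂μ := by
  have hA : MeasurableSet {ω | r < L ω} := measurableSet_lt measurable_const hLmeas
  have hg_bdd : ∀ᵐ ω ∂μ, ‖g ω‖ ≤ 1 := ae_of_all _ fun ω => by
    rw [Real.norm_of_nonneg (hg01 ω).1]; exact (hg01 ω).2
  have hg_int : Integrable g μ := .of_bound hg 1 hg_bdd
  have hgL_int : Integrable (fun ω => g ω * L ω) μ := hL.bdd_mul hg hg_bdd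
  have hpointwise : ∫ ω, g ω * (L ω - r) ∂μ ≤ ∫ ω in {ω | r < L ω}, (L ω - r) ∂μ := by
    rw [← integral_indicator hA]
    refine integral_mono ((hL.sub (integrable_const r)).bdd_mul hg hg_bdd)
      ((hL.sub (integrable_const r)).indicator hA) fun ω => ?_
    simpa only [indicator_apply, mem_ofPred_eq] using mul_sub_le_ite_sub (hg01 ω)
  have hlhs : ∫ ω, g ω * (L ω - r) ∂μ = ∫ ω, g ω * L ω ∂μ - (∫ ω, g ω ∂μ) * r := by
    simp only [mul_sub]
    rw [integral_sub hgL_int (hg_int.mul_const r), integral_mul_const]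
  have hrhs : ∫ ω in {ω | r < L ω}, (L ω - r) ∂μ
      = ∫ ω in {ω | r < L ω}, L ω ∂μ - μ.real {ω | r < L ω} * r := by
    rw [integral_sub hL.integrableOn (integrable_const r), setIntegral_const, smul_eq_mul]
  rw [hlhs, hrhs, hrate] at hpointwise
  linarith

theorem thresholding_maximizes_general {Ω : Type*} [MeasurableSpace Ω] (μ : Measure Ω)
    [IsProbabilityMeasure μ] (L : Ω → ℝ) (hLmeas : Measurable L)
    (hLint : Integrable L μ)
    (q : ℝ) (r : ℝ)
    (hrq : μ {ω | r < L ω} = ENNReal.ofReal q)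
    (s : ℝ → ℝ) (hs : Measurable s) (hs01 : ∀ x, s x ∈ Set.Icc (0 : ℝ) 1)
    (hsq : ∫ ω, s (L ω) ∂μ = q) :
    ∫ ω, s (L ω) * L ω ∂μ ≤ ∫ ω, (if r < L ω then L ω else 0) ∂μ := by
  have hq : 0 ≤ q := hsq ▸ integral_nonneg fun ω => (hs01 (L ω)).1
  have hrate : ∫ ω, s (L ω) ∂μ = μ.real {ω | r < L ω} := by
    rw [measureReal_def, hrq, ENNReal.toReal_ofReal hq, hsq]
  calc ∫ ω, s (L ω) * L ω ∂μ ≤ ∫ ω in {ω | r < L ω}, L ω ∂μ :=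
        integral_mul_le_setIntegral_of_integral_eq hLmeas hLint
          (hs.comp hLmeas).aestronglyMeasurable (fun ω => hs01 (L ω)) hrate
    _ = ∫ ω, (if r < L ω then L ω else 0) ∂μ := by
        rw [← integral_indicator (measurableSet_lt measurable_const hLmeas)]
        rfl

/-- Neyman–Pearson-type optimality: among all randomized selection rules
`s : ℝ → [0,1]` with selection rate `E[s(L)] = q`, the hard-thresholding rule
`1_{L > r}` (with `P(L > r) = q`) maximizes the expected selected score `E[s(L)·L]`. -/
theorem thresholding_maximizes {Ω : Type*} [MeasurableSpace Ω] (μ : Measure Ω)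
    [IsProbabilityMeasure μ] (L : Ω → ℝ) (hLmeas : Measurable L)
    (hLnonneg : ∀ ω, 0 ≤ L ω) (hLint : Integrable L μ)
    (q : ℝ) (hq : q ∈ Set.Ioc (0 : ℝ) 1) (r : ℝ) (hr : 0 ≤ r)
    (hrq : μ {ω | r < L ω} = ENNReal.ofReal q)
    (s : ℝ → ℝ) (hs : Measurable s) (hs01 : ∀ x, s x ∈ Set.Icc (0 : ℝ) 1)
    (hsq : ∫ ω, s (L ω) ∂μ = q) :
    ∫ ω, s (L ω) * L ω ∂μ ≤ ∫ ω, (if r < L ω then L ω else 0) ∂μ :=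
  thresholding_maximizes_general μ L hLmeas hLint q r hrq s hs hs01 hsq
end

section
/- Let L be a nonnegative random variable, q₀ ∈ [0,q] with q ∈ (0,1], and suppose r ≥ 0 satisfies P(L > r) = (q − q₀)/(1 − q₀) (with q₀ < 1). Define s*(ℓ) = q₀ + (1 − q₀)·1_{ℓ > r}. Then E[s*(L)] = q, and for every measurable s : ℝ → [q₀, 1] with E[s(L)] = q, one has E[s(L)·L] ≤ E[s*(L)·L]. -/
/-!
Both rules select at the same rate, so for any `r` the difference of their gains is
`E[(s*(L) - s(L)) (L - r)]`. Since `s*` takes the largest admissible value `1` exactly where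
`L > r` and the smallest admissible value `q₀` elsewhere, the integrand is pointwise nonnegative.
-/

open MeasureTheory

noncomputable def relaxedThreshold (q₀ r ℓ : ℝ) : ℝ :=
  q₀ + (1 - q₀) * if r < ℓ then 1 else 0

lemma measurable_relaxedThreshold (q₀ r : ℝ) : Measurable (relaxedThreshold q₀ r) :=
  measurable_const.add <|
    (Measurable.ite measurableSet_Ioi measurable_const measurable_const).const_mul _

lemma relaxedThreshold_mem_Icc {q₀ : ℝ} (hq₀ : q₀ ≤ 1) (r ℓ : ℝ) :
    relaxedThreshold q₀ r ℓ ∈ Set.Icc q₀ 1 := by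
  unfold relaxedThreshold
  split_ifs <;> constructor <;> linarith

lemma relaxedThreshold_sub_mul_sub_nonneg {q₀ y : ℝ} (hy : y ∈ Set.Icc q₀ 1) (r ℓ : ℝ) :
    0 ≤ (relaxedThreshold q₀ r ℓ - y) * (ℓ - r) := by
  unfold relaxedThreshold
  split_ifs with h
  · exact mul_nonneg (by linarith [hy.2]) (by linarith)
  · exact mul_nonneg_of_nonpos_of_nonpos (by linarith [hy.1]) (by linarith)

lemma integral_relaxedThreshold {Ω : Type*} [MeasurableSpace Ω] (μ : Measure Ω)
    [IsProbabilityMeasure μ] {L : Ω → ℝ} (hL : Measurable L) (q₀ r : ℝ) :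
    ∫ ω, relaxedThreshold q₀ r (L ω) ∂μ = q₀ + (1 - q₀) * μ.real {ω | r < L ω} := by
  have hA : MeasurableSet {ω | r < L ω} := measurableSet_lt measurable_const hL
  have hind (ω : Ω) : (if r < L ω then (1 : ℝ) else 0) = {ω | r < L ω}.indicator 1 ω := by
    simp [Set.indicator_apply]
  simp only [relaxedThreshold, hind]
  rw [integral_add (integrable_const _) (((integrable_const 1).indicator hA).const_mul _),
    integral_const_mul, integral_indicator_one hA]
  simp

section BoundedComposition

variable {Ω : Type*} [MeasurableSpace Ω] {μ : Measure Ω} {L : Ω → ℝ} {h : ℝ → ℝ} {a b : ℝ}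

lemma integrable_comp_of_mem_Icc [IsFiniteMeasure μ] (hL : Measurable L) (hh : Measurable h)
    (hab : ∀ x, h x ∈ Set.Icc a b) : Integrable (fun ω => h (L ω)) μ :=
  memLp_one_iff_integrable.mp <|
    memLp_of_bounded (.of_forall fun ω => hab (L ω)) (hh.comp hL).aestronglyMeasurable 1

lemma integrable_comp_mul_of_mem_Icc (hL : Measurable L) (hLi : Integrable L μ)
    (hh : Measurable h) (hab : ∀ x, h x ∈ Set.Icc a b) :
    Integrable (fun ω => h (L ω) * L ω) μ :=
  hLi.bdd_mul (hh.comp hL).aestronglyMeasurable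
    (.of_forall fun ω => abs_le_max_abs_abs (hab (L ω)).1 (hab (L ω)).2)

end BoundedComposition

lemma integral_mul_le_of_sub_mul_sub_nonneg {Ω : Type*} [MeasurableSpace Ω] {μ : Measure Ω}
    {f g L : Ω → ℝ} (r : ℝ) (hf : Integrable f μ) (hg : Integrable g μ)
    (hfL : Integrable (fun ω => f ω * L ω) μ) (hgL : Integrable (fun ω => g ω * L ω) μ)
    (hfg : ∫ ω, g ω ∂μ = ∫ ω, f ω ∂μ) (hsign : ∀ ω, 0 ≤ (f ω - g ω) * (L ω - r)) :
    ∫ ω, g ω * L ω ∂μ ≤ ∫ ω, f ω * L ω ∂μ := by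
  have hgap : 0 ≤ ∫ ω, (f ω * L ω - g ω * L ω) - r * (f ω - g ω) ∂μ :=
    integral_nonneg fun ω => (hsign ω).trans_eq (by ring)
  have hdiffL : Integrable (fun ω => f ω * L ω - g ω * L ω) μ := hfL.sub hgL
  have hdiff : Integrable (fun ω => r * (f ω - g ω)) μ := (hf.sub hg).const_mul r
  rw [integral_sub hdiffL hdiff, integral_sub hfL hgL, integral_const_mul, integral_sub hf hg,
    hfg] at hgap
  linarith

theorem relaxed_thresholding_maximizes_general {Ω : Type*} [MeasurableSpace Ω] (μ : Measure Ω)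
    [IsProbabilityMeasure μ] (L : Ω → ℝ) (hLmeas : Measurable L)
    (hLint : Integrable L μ)
    (q q₀ : ℝ) (hq₀ : q₀ ∈ Set.Ico (0 : ℝ) q) (hq₀1 : q₀ < 1)
    (r : ℝ)
    (hrq : μ {ω | r < L ω} = ENNReal.ofReal ((q - q₀) / (1 - q₀))) :
    (∫ ω, (q₀ + (1 - q₀) * (if r < L ω then (1 : ℝ) else 0)) ∂μ = q) ∧
      ∀ s : ℝ → ℝ, Measurable s → (∀ x, s x ∈ Set.Icc q₀ 1) →
        (∫ ω, s (L ω) ∂μ = q) →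
        ∫ ω, s (L ω) * L ω ∂μ ≤
          ∫ ω, (q₀ + (1 - q₀) * (if r < L ω then (1 : ℝ) else 0)) * L ω ∂μ := by
  have hrate : ∫ ω, relaxedThreshold q₀ r (L ω) ∂μ = q := by
    rw [integral_relaxedThreshold μ hLmeas, measureReal_def, hrq,
      ENNReal.toReal_ofReal (div_nonneg (by linarith [hq₀.2]) (by linarith))]
    field_simp [sub_ne_zero.mpr hq₀1.ne']
    ring
  refine ⟨hrate, fun s hs hsIcc hsrate => ?_⟩
  show ∫ ω, s (L ω) * L ω ∂μ ≤ ∫ ω, relaxedThreshold q₀ r (L ω) * L ω ∂μ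
  have hstar := measurable_relaxedThreshold q₀ r
  have hstarIcc := relaxedThreshold_mem_Icc hq₀1.le r
  exact integral_mul_le_of_sub_mul_sub_nonneg r
    (integrable_comp_of_mem_Icc hLmeas hstar hstarIcc) (integrable_comp_of_mem_Icc hLmeas hs hsIcc)
    (integrable_comp_mul_of_mem_Icc hLmeas hLint hstar hstarIcc)
    (integrable_comp_mul_of_mem_Icc hLmeas hLint hs hsIcc)
    (hsrate.trans hrate.symm) fun ω => relaxedThreshold_sub_mul_sub_nonneg (hsIcc (L ω)) r (L ω)

/-- Relaxed leverage score sampling optimality: among all selection rules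
`s : ℝ → [q₀,1]` with selection rate `E[s(L)] = q`, the rule
`s*(ℓ) = q₀ + (1−q₀)·1_{ℓ > r}` (with `P(L > r) = (q−q₀)/(1−q₀)`) attains rate `q`
and maximizes `E[s(L)·L]`. -/
theorem relaxed_thresholding_maximizes {Ω : Type*} [MeasurableSpace Ω] (μ : Measure Ω)
    [IsProbabilityMeasure μ] (L : Ω → ℝ) (hLmeas : Measurable L)
    (hLnonneg : ∀ ω, 0 ≤ L ω) (hLint : Integrable L μ)
    (q q₀ : ℝ) (hq : q ∈ Set.Ioc (0 : ℝ) 1) (hq₀ : q₀ ∈ Set.Ico (0 : ℝ) q) (hq₀1 : q₀ < 1)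
    (r : ℝ) (hr : 0 ≤ r)
    (hrq : μ {ω | r < L ω} = ENNReal.ofReal ((q - q₀) / (1 - q₀))) :
    (∫ ω, (q₀ + (1 - q₀) * (if r < L ω then (1 : ℝ) else 0)) ∂μ = q) ∧
      ∀ s : ℝ → ℝ, Measurable s → (∀ x, s x ∈ Set.Icc q₀ 1) →
        (∫ ω, s (L ω) ∂μ = q) →
        ∫ ω, s (L ω) * L ω ∂μ ≤
          ∫ ω, (q₀ + (1 - q₀) * (if r < L ω then (1 : ℝ) else 0)) * L ω ∂μ :=
  relaxed_thresholding_maximizes_general μ L hLmeas hLint q q₀ hq₀ hq₀1 r hrq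
end

section
/- Let ξ be a nonnegative random variable with E[ξ²] < ∞, let S be uniform on the unit sphere of ℝ^p independent of ξ, let Σ be symmetric positive definite, and let X = ξ Σ^{1/2} S. Let f : [0,∞) → [0,1] be measurable and define s(x) = f(xᵀ Σ⁻¹ x). Then E[s(X) X Xᵀ] = c · Σ, where c = (1/p) · E[f(ξ²) ξ²]. -/
open MeasureTheory ProbabilityTheory Matrix

/-!
Write `Σ = R R` with `R` symmetric. Then `Xᵀ Σ⁻¹ X = ξ² ‖S‖² = ξ²`, so
`s(X) X Xᵀ = f(ξ²) ξ² · R (S Sᵀ) R`, and by independence `E[s(X) X Xᵀ] = E[f(ξ²) ξ²] · R E[S Sᵀ] R`.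
For a rotation-invariant law on the unit sphere `E[S Sᵀ] = p⁻¹ I`: flipping the sign of one
coordinate kills the off-diagonal moments, swapping two coordinates equalises the diagonal ones,
and the diagonal ones add up to `E ‖S‖² = 1`.
-/

theorem Matrix.dotProduct_inv_mulVec_mulVec_of_mul_self {n α : Type*} [Fintype n] [DecidableEq n]
    [CommRing α] {R Q : Matrix n n α} (hR : R.IsSymm) (hRR : R * R = Q) (hQ : IsUnit Q.det)
    (w : n → α) : R *ᵥ w ⬝ᵥ Q⁻¹ *ᵥ (R *ᵥ w) = w ⬝ᵥ w := by
  have hRdet : IsUnit R.det := by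
    rw [← hRR, det_mul] at hQ
    exact isUnit_of_mul_isUnit_left hQ
  have hsandwich : R * Q⁻¹ * R = 1 := by
    rw [← hRR, mul_inv_rev, ← Matrix.mul_assoc, mul_nonsing_inv _ hRdet, Matrix.one_mul,
      nonsing_inv_mul _ hRdet]
  calc R *ᵥ w ⬝ᵥ Q⁻¹ *ᵥ (R *ᵥ w) = w ᵥ* R ⬝ᵥ Q⁻¹ *ᵥ (R *ᵥ w) := by
        rw [← mulVec_transpose, hR.eq]
    _ = w ⬝ᵥ (R * Q⁻¹ * R) *ᵥ w := by
        rw [← dotProduct_mulVec, mulVec_mulVec, mulVec_mulVec, Matrix.mul_assoc]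
    _ = w ⬝ᵥ w := by rw [hsandwich, one_mulVec]

theorem Matrix.vecMulVec_smul_mulVec_self {n α : Type*} [Fintype n] [CommRing α] (c : α)
    (R : Matrix n n α) (w : n → α) :
    vecMulVec (c • R *ᵥ w) (c • R *ᵥ w) = c ^ 2 • (R * vecMulVec w w * Rᵀ) := by
  rw [mul_vecMulVec, vecMulVec_mul, vecMul_transpose, smul_vecMulVec, vecMulVec_smul, smul_smul,
    sq]

theorem Matrix.integral_mul_mul_apply {Ω l m n o : Type*} [MeasurableSpace Ω] {μ : Measure Ω}
    [Fintype m] [Fintype n] (A : Matrix l m ℝ) (M : Ω → Matrix m n ℝ) (B : Matrix n o ℝ)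
    (hM : ∀ i j, Integrable (fun ω => M ω i j) μ) (i : l) (j : o) :
    ∫ ω, (A * M ω * B) i j ∂μ = (A * (of fun i j => ∫ ω, M ω i j ∂μ) * B) i j := by
  simp only [mul_apply, of_apply, Finset.sum_mul]
  rw [integral_finsetSum _ fun k _ => integrable_finsetSum _ fun l _ =>
    ((hM l k).const_mul _).mul_const _]
  refine Finset.sum_congr rfl fun k _ => ?_
  rw [integral_finsetSum _ fun l _ => ((hM l k).const_mul _).mul_const _]
  simp only [integral_mul_const, integral_const_mul]

theorem integral_comp_linearIsometryEquiv_of_map_eq {E G : Type*} [NormedAddCommGroup E]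
    [NormedSpace ℝ E] [MeasurableSpace E] [BorelSpace E] [NormedAddCommGroup G] [NormedSpace ℝ G]
    {ν : Measure E} (g : E ≃ₗᵢ[ℝ] E) (hg : ν.map g = ν) (φ : E → G) :
    ∫ v, φ (g v) ∂ν = ∫ v, φ v ∂ν :=
  MeasurePreserving.integral_comp ⟨g.continuous.measurable, hg⟩
    g.toHomeomorph.measurableEmbedding φ

theorem EuclideanSpace.ofLp_dotProduct_ofLp_self {ι : Type*} [Fintype ι]
    (v : EuclideanSpace ℝ ι) : v.ofLp ⬝ᵥ v.ofLp = ‖v‖ ^ 2 := by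
  simp [dotProduct, ← sq, EuclideanSpace.real_norm_sq_eq]

theorem EuclideanSpace.norm_coord_mul_coord_le {ι : Type*} [Fintype ι]
    (v : EuclideanSpace ℝ ι) (k l : ι) : ‖v k * v l‖ ≤ ‖v‖ ^ 2 := by
  rw [norm_mul, sq]
  exact mul_le_mul (PiLp.norm_apply_le v k) (PiLp.norm_apply_le v l) (norm_nonneg _)
    (norm_nonneg _)

section Isotropic

variable {p : ℕ} {ν : Measure (EuclideanSpace ℝ (Fin p))}

theorem integral_coord_mul_coord_of_ne
    (hν : ∀ g : EuclideanSpace ℝ (Fin p) ≃ₗᵢ[ℝ] EuclideanSpace ℝ (Fin p), ν.map g = ν)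
    {k l : Fin p} (hkl : k ≠ l) : ∫ v, v k * v l ∂ν = 0 := by
  let g : EuclideanSpace ℝ (Fin p) ≃ₗᵢ[ℝ] EuclideanSpace ℝ (Fin p) :=
    LinearIsometryEquiv.piLpCongrRight 2 fun i => if i = k then .neg ℝ else .refl ℝ ℝ
  have hflip : ∀ v, g v k * g v l = -(v k * v l) := fun v => by
    simp [g, LinearIsometryEquiv.piLpCongrRight_apply, hkl.symm]
  have h := integral_comp_linearIsometryEquiv_of_map_eq g (hν g) fun v => v k * v l
  simp only [hflip, integral_neg] at h
  linarith

theorem integral_coord_mul_self_eq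
    (hν : ∀ g : EuclideanSpace ℝ (Fin p) ≃ₗᵢ[ℝ] EuclideanSpace ℝ (Fin p), ν.map g = ν)
    (k l : Fin p) : ∫ v, v k * v k ∂ν = ∫ v, v l * v l ∂ν := by
  let g := LinearIsometryEquiv.piLpCongrLeft 2 ℝ ℝ (Equiv.swap k l)
  have hswap : ∀ v, g v l = v k := fun v => by
    simp [g, LinearIsometryEquiv.piLpCongrLeft_apply, Equiv.piCongrLeft']
  rw [← integral_comp_linearIsometryEquiv_of_map_eq g (hν g) fun v => v l * v l]
  simp only [hswap]

theorem integral_coord_mul_self [IsProbabilityMeasure ν]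
    (hν : ∀ g : EuclideanSpace ℝ (Fin p) ≃ₗᵢ[ℝ] EuclideanSpace ℝ (Fin p), ν.map g = ν)
    (hsphere : ∀ᵐ v ∂ν, ‖v‖ = 1) (k : Fin p) : ∫ v, v k * v k ∂ν = (p : ℝ)⁻¹ := by
  have hint : ∀ i, Integrable (fun v : EuclideanSpace ℝ (Fin p) => v i * v i) ν := fun i =>
    .of_bound (by fun_prop) 1 <| hsphere.mono fun v hv => by
      simpa [hv] using v.norm_coord_mul_coord_le i i
  have htotal : ∑ i, ∫ v, v i * v i ∂ν = 1 := by
    rw [← integral_finsetSum _ fun i _ => hint i]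
    calc ∫ v, ∑ i, v i * v i ∂ν = ∫ _, (1 : ℝ) ∂ν := by
          refine integral_congr_ae (hsphere.mono fun v hv => ?_)
          have hunit := v.ofLp_dotProduct_ofLp_self
          rwa [hv, one_pow] at hunit
      _ = 1 := by simp
  simp only [integral_coord_mul_self_eq hν _ k, Finset.sum_const, Finset.card_univ,
    Fintype.card_fin, nsmul_eq_mul] at htotal
  exact eq_inv_of_mul_eq_one_right htotal

theorem of_integral_coord_mul_coord_eq_inv_smul_one [IsProbabilityMeasure ν]
    (hν : ∀ g : EuclideanSpace ℝ (Fin p) ≃ₗᵢ[ℝ] EuclideanSpace ℝ (Fin p), ν.map g = ν)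
    (hsphere : ∀ᵐ v ∂ν, ‖v‖ = 1) :
    (of fun k l => ∫ v, v k * v l ∂ν) = (p : ℝ)⁻¹ • (1 : Matrix (Fin p) (Fin p) ℝ) := by
  ext k l
  rcases eq_or_ne k l with rfl | hkl
  · simp [integral_coord_mul_self hν hsphere]
  · simp [integral_coord_mul_coord_of_ne hν hkl, hkl]

theorem of_integral_mul_coord_mul_coord_eq_of_indepFun {Ω : Type*} [MeasurableSpace Ω]
    {μ : Measure Ω} [IsProbabilityMeasure μ] {W : Ω → ℝ} {S : Ω → EuclideanSpace ℝ (Fin p)}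
    (hW : AEMeasurable W μ) (hS : Measurable S) (hWS : IndepFun W S μ)
    (hS_unif : ∀ g : EuclideanSpace ℝ (Fin p) ≃ₗᵢ[ℝ] EuclideanSpace ℝ (Fin p),
      (μ.map S).map g = μ.map S)
    (hS_sphere : ∀ ω, ‖S ω‖ = 1) :
    (of fun k l => ∫ ω, W ω * (S ω k * S ω l) ∂μ) =
      ((p : ℝ)⁻¹ * ∫ ω, W ω ∂μ) • (1 : Matrix (Fin p) (Fin p) ℝ) := by
  have : IsProbabilityMeasure (μ.map S) := Measure.isProbabilityMeasure_map hS.aemeasurable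
  have hsphere : ∀ᵐ v ∂(μ.map S), ‖v‖ = 1 :=
    (ae_map_iff hS.aemeasurable (measurableSet_eq_fun measurable_norm measurable_const)).2
      (ae_of_all _ hS_sphere)
  have hfactor : ∀ k l, ∫ ω, W ω * (S ω k * S ω l) ∂μ =
      (∫ ω, W ω ∂μ) * ∫ v, v k * v l ∂(μ.map S) := fun k l => by
    rw [integral_map hS.aemeasurable (by fun_prop)]
    exact hWS.integral_fun_comp_mul_comp (f := id) (g := fun v => v k * v l) hW hS.aemeasurable
      aestronglyMeasurable_id (by fun_prop)
  ext k l
  have hmoment := congrFun₂ (of_integral_coord_mul_coord_eq_inv_smul_one hS_unif hsphere) k l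
  rw [of_apply] at hmoment
  rw [of_apply, hfactor, hmoment]
  simp only [Matrix.smul_apply, smul_eq_mul]
  ring

end Isotropic

theorem elliptical_design_matrix_general {p : ℕ}
    {Ω : Type*} [MeasurableSpace Ω] (μ : Measure Ω) [IsProbabilityMeasure μ]
    (ξ : Ω → ℝ) (hξmeas : Measurable ξ)
    (hξint : Integrable (fun ω => ξ ω ^ 2) μ)
    (S : Ω → EuclideanSpace ℝ (Fin p)) (hSmeas : Measurable S)
    (hSsphere : ∀ ω, ‖S ω‖ = 1)
    (hSunif : ∀ g : EuclideanSpace ℝ (Fin p) ≃ₗᵢ[ℝ] EuclideanSpace ℝ (Fin p),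
      (μ.map S).map g = μ.map S)
    (hindep : IndepFun ξ S μ)
    (Sig R : Matrix (Fin p) (Fin p) ℝ) (hSig : Sig.PosDef)
    (hRsym : R.IsSymm) (hRR : R * R = Sig)
    (X : Ω → Fin p → ℝ) (hX : X = fun ω => ξ ω • R.mulVec (fun i => S ω i))
    (f : ℝ → ℝ) (hf : Measurable f) (hf01 : ∀ x, f x ∈ Set.Icc (0 : ℝ) 1)
    (s : (Fin p → ℝ) → ℝ) (hs : s = fun x => f (x ⬝ᵥ Sig⁻¹.mulVec x)) :
    (Matrix.of fun i j => ∫ ω, s (X ω) * (X ω i * X ω j) ∂μ) =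
      ((p : ℝ)⁻¹ * ∫ ω, f (ξ ω ^ 2) * ξ ω ^ 2 ∂μ) • Sig := by
  set W : Ω → ℝ := fun ω => f (ξ ω ^ 2) * ξ ω ^ 2
  set M : Ω → Matrix (Fin p) (Fin p) ℝ := fun ω => W ω • vecMulVec (S ω).ofLp (S ω).ofLp
  have hXω : ∀ ω, X ω = ξ ω • R *ᵥ (S ω).ofLp := fun ω => by rw [hX]
  have hscore : ∀ ω, s (X ω) = f (ξ ω ^ 2) := fun ω => by
    simp only [hs, hXω, mulVec_smul, smul_dotProduct, dotProduct_smul, smul_eq_mul,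
      dotProduct_inv_mulVec_mulVec_of_mul_self hRsym hRR hSig.det_pos.ne'.isUnit,
      EuclideanSpace.ofLp_dotProduct_ofLp_self, hSsphere]
    ring_nf
  have hpointwise : ∀ ω i j, s (X ω) * (X ω i * X ω j) = (R * M ω * R) i j := fun ω i j => by
    have hXX := congrFun₂ (vecMulVec_smul_mulVec_self (ξ ω) R (S ω).ofLp) i j
    simp only [vecMulVec_apply, ← hXω, hRsym.eq] at hXX
    simp only [hscore, hXX, M, W, Matrix.mul_smul, Matrix.smul_mul, Matrix.smul_apply, smul_eq_mul]
    ring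
  have hW : Integrable W μ := hξint.mono' (by fun_prop) <| ae_of_all _ fun ω => by
    obtain ⟨hf0, hf1⟩ := hf01 (ξ ω ^ 2)
    rw [Real.norm_of_nonneg (by positivity)]
    nlinarith [sq_nonneg (ξ ω)]
  have hM : ∀ k l, Integrable (fun ω => M ω k l) μ := fun k l =>
    hW.mul_bdd (c := 1) (by fun_prop) <| ae_of_all _ fun ω => by
      simpa [vecMulVec_apply, hSsphere] using (S ω).norm_coord_mul_coord_le k l
  have hmoment : (of fun k l => ∫ ω, M ω k l ∂μ) = ((p : ℝ)⁻¹ * ∫ ω, W ω ∂μ) • 1 :=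
    of_integral_mul_coord_mul_coord_eq_of_indepFun (by fun_prop) hSmeas
      (hindep.comp (φ := fun x => f (x ^ 2) * x ^ 2) (by fun_prop) measurable_id) hSunif hSsphere
  ext i j
  rw [of_apply, integral_congr_ae (ae_of_all _ fun ω => hpointwise ω i j),
    integral_mul_mul_apply R M R hM, hmoment, Matrix.mul_smul, Matrix.mul_one, Matrix.smul_mul, hRR]

/-- For a sampling function depending only on the Mahalanobis (leverage) score of a
centered elliptical covariate `X = ξ Σ^{1/2} S`, the design matrix
`Γ(s) = E[s(X) X Xᵀ]` is proportional to `Σ`: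
`E[s(X) X Xᵀ] = c Σ` with `c = (1/p) E[f(ξ²) ξ²]`, where `s(x) = f(xᵀ Σ⁻¹ x)`. -/
theorem elliptical_design_matrix {p : ℕ} (hp : 0 < p)
    {Ω : Type*} [MeasurableSpace Ω] (μ : Measure Ω) [IsProbabilityMeasure μ]
    (ξ : Ω → ℝ) (hξmeas : Measurable ξ) (hξ0 : ∀ ω, 0 ≤ ξ ω)
    (hξint : Integrable (fun ω => ξ ω ^ 2) μ)
    (S : Ω → EuclideanSpace ℝ (Fin p)) (hSmeas : Measurable S)
    (hSsphere : ∀ ω, ‖S ω‖ = 1)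
    (hSunif : ∀ g : EuclideanSpace ℝ (Fin p) ≃ₗᵢ[ℝ] EuclideanSpace ℝ (Fin p),
      (μ.map S).map g = μ.map S)
    (hindep : IndepFun ξ S μ)
    (Sig R : Matrix (Fin p) (Fin p) ℝ) (hSig : Sig.PosDef)
    (hRsym : R.IsSymm) (hRR : R * R = Sig)
    (X : Ω → Fin p → ℝ) (hX : X = fun ω => ξ ω • R.mulVec (fun i => S ω i))
    (f : ℝ → ℝ) (hf : Measurable f) (hf01 : ∀ x, f x ∈ Set.Icc (0 : ℝ) 1)
    (s : (Fin p → ℝ) → ℝ) (hs : s = fun x => f (x ⬝ᵥ Sig⁻¹.mulVec x)) :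
    (Matrix.of fun i j => ∫ ω, s (X ω) * (X ω i * X ω j) ∂μ) =
      ((p : ℝ)⁻¹ * ∫ ω, f (ξ ω ^ 2) * ξ ω ^ 2 ∂μ) • Sig :=
  elliptical_design_matrix_general μ ξ hξmeas hξint S hSmeas hSsphere hSunif hindep Sig R hSig hRsym
    hRR X hX f hf hf01 s hs
end

section
/- Let L be a nonnegative random variable with absolutely continuous distribution, q ∈ (0,1), and r with P(L > r) = q. Suppose s : [0,∞) → [0,1] is measurable with E[s(L)] = q and E[s(L) L] = E[1_{L > r} L]. Then s(L) = 1_{L > r} almost surely. -/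
/-!
The gap `(1_{r < x} - t) (x - r)` is nonnegative for every `t ∈ [0, 1]`, and it vanishes only
where `t = 1_{r < x}` or `x = r`. At `x = L`, `t = s(L)` its expectation is
`(E[1_{r<L} L] - E[s(L) L]) - r (P(r < L) - E[s(L)])`, which the two hypotheses make zero; so
the gap vanishes almost surely, and `L ≠ r` almost surely because the law of `L` has no atoms.
-/

open MeasureTheory Set

lemma threshold_gap_nonneg {x r t : ℝ} (ht : t ∈ Icc (0 : ℝ) 1) :
    0 ≤ ((if r < x then 1 else 0) - t) * (x - r) := by
  split_ifs with h
  · exact mul_nonneg (by linarith [ht.2]) (by linarith)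
  · exact mul_nonneg_of_nonpos_of_nonpos (by linarith [ht.1]) (by linarith)

lemma eq_threshold_of_threshold_gap_eq_zero {x r t : ℝ} (hx : x ≠ r)
    (h : ((if r < x then 1 else 0) - t) * (x - r) = 0) :
    t = if r < x then 1 else 0 := by
  rcases mul_eq_zero.mp h with h | h
  · linarith
  · exact absurd (sub_eq_zero.mp h) hx

lemma measure_preimage_singleton_eq_zero_of_map_absolutelyContinuous
    {Ω α : Type*} [MeasurableSpace Ω] [MeasurableSpace α] [MeasurableSingletonClass α]
    {μ : Measure Ω} {ν : Measure α} [NullSingletonClass ν] {f : Ω → α} (hf : Measurable f)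
    (hac : μ.map f ≪ ν) (a : α) :
    μ {ω | f ω = a} = 0 := by
  have : μ.map f {a} = 0 := hac (measure_singleton a)
  rwa [Measure.map_apply hf (measurableSet_singleton a)] at this

lemma norm_le_one_of_mem_Icc {t : ℝ} (ht : t ∈ Icc (0 : ℝ) 1) : ‖t‖ ≤ 1 := by
  rw [Real.norm_of_nonneg ht.1]
  exact ht.2

section Threshold

variable {Ω : Type*} [MeasurableSpace Ω] {μ : Measure Ω} [IsFiniteMeasure μ]
  {f φ : Ω → ℝ} {r : ℝ}

lemma integrable_threshold_gap (hfm : Measurable f) (hf : Integrable f μ)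
    (hφ : AEStronglyMeasurable φ μ) (hφ01 : ∀ ω, φ ω ∈ Icc (0 : ℝ) 1) :
    Integrable (fun ω => ((if r < f ω then 1 else 0) - φ ω) * (f ω - r)) μ := by
  have hind : Measurable fun ω => if r < f ω then (1 : ℝ) else 0 :=
    Measurable.ite (measurableSet_lt measurable_const hfm) measurable_const measurable_const
  refine (hf.sub (integrable_const r)).bdd_mul (c := 1) (hind.aestronglyMeasurable.sub hφ)
    (.of_forall fun ω => ?_)
  rw [Real.norm_eq_abs, abs_le]
  have := hφ01 ω
  split_ifs <;> constructor <;> linarith [this.1, this.2]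

lemma integral_threshold_gap (hfm : Measurable f) (hf : Integrable f μ)
    (hφ : AEStronglyMeasurable φ μ) (hφ01 : ∀ ω, φ ω ∈ Icc (0 : ℝ) 1) :
    ∫ ω, ((if r < f ω then 1 else 0) - φ ω) * (f ω - r) ∂μ
      = (∫ ω, (if r < f ω then f ω else 0) ∂μ - ∫ ω, φ ω * f ω ∂μ)
        - r * (μ.real {ω | r < f ω} - ∫ ω, φ ω ∂μ) := by
  have hset : MeasurableSet {ω | r < f ω} := measurableSet_lt measurable_const hfm
  have hφ_bdd : ∀ᵐ ω ∂μ, ‖φ ω‖ ≤ 1 := .of_forall fun ω => norm_le_one_of_mem_Icc (hφ01 ω)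
  have hφi : Integrable φ μ := (integrable_const 1).mono' hφ hφ_bdd
  have hφf : Integrable (fun ω => φ ω * f ω) μ := hf.bdd_mul hφ hφ_bdd
  have hindi : Integrable ({ω | r < f ω}.indicator (1 : Ω → ℝ)) μ :=
    (integrable_const 1).indicator hset
  have hindfi : Integrable ({ω | r < f ω}.indicator f) μ := hf.indicator hset
  have hindf : (fun ω => if r < f ω then f ω else 0) = {ω | r < f ω}.indicator f := by
    ext ω; simp [indicator_apply]
  have hexp : (fun ω => ((if r < f ω then 1 else 0) - φ ω) * (f ω - r))
      = fun ω => ({ω | r < f ω}.indicator f ω - φ ω * f ω)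
        - r * ({ω | r < f ω}.indicator 1 ω - φ ω) := by
    ext ω; simp only [indicator_apply, mem_ofPred_eq, Pi.one_apply]; split_ifs <;> ring
  rw [hexp, integral_sub, integral_sub hindfi hφf, integral_const_mul, integral_sub hindi hφi,
    integral_indicator_one hset, hindf]
  · exact hindfi.sub hφf
  · exact (hindi.sub hφi).const_mul r

theorem ae_eq_threshold_of_integral_eq (hfm : Measurable f) (hf : Integrable f μ)
    (hφ : AEStronglyMeasurable φ μ) (hφ01 : ∀ ω, φ ω ∈ Icc (0 : ℝ) 1)
    (hatom : μ {ω | f ω = r} = 0) (hmass : ∫ ω, φ ω ∂μ = μ.real {ω | r < f ω})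
    (hmoment : ∫ ω, φ ω * f ω ∂μ = ∫ ω, (if r < f ω then f ω else 0) ∂μ) :
    ∀ᵐ ω ∂μ, φ ω = if r < f ω then 1 else 0 := by
  have hgap_zero : ∀ᵐ ω ∂μ, ((if r < f ω then 1 else 0) - φ ω) * (f ω - r) = 0 := by
    refine (integral_eq_zero_iff_of_nonneg (fun ω => threshold_gap_nonneg (hφ01 ω))
      (integrable_threshold_gap hfm hf hφ hφ01)).mp ?_
    rw [integral_threshold_gap hfm hf hφ hφ01, hmass, hmoment]
    ring
  have hne : ∀ᵐ ω ∂μ, f ω ≠ r := ae_iff.mpr (by simpa using hatom)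
  filter_upwards [hgap_zero, hne] with ω hgap hω
  exact eq_threshold_of_threshold_gap_eq_zero hω hgap

end Threshold

theorem thresholding_unique_general {Ω : Type*} [MeasurableSpace Ω] (μ : Measure Ω)
    [IsProbabilityMeasure μ] (L : Ω → ℝ) (hLmeas : Measurable L)
    (hLint : Integrable L μ)
    (hLac : (μ.map L) ≪ (volume : Measure ℝ))
    (q : ℝ) (r : ℝ)
    (hrq : μ {ω | r < L ω} = ENNReal.ofReal q)
    (s : ℝ → ℝ) (hs : Measurable s) (hs01 : ∀ x, s x ∈ Set.Icc (0 : ℝ) 1)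
    (hsq : ∫ ω, s (L ω) ∂μ = q)
    (heq : ∫ ω, s (L ω) * L ω ∂μ = ∫ ω, (if r < L ω then L ω else 0) ∂μ) :
    ∀ᵐ ω ∂μ, s (L ω) = (if r < L ω then (1 : ℝ) else 0) := by
  have hq : 0 ≤ q := hsq ▸ integral_nonneg fun ω => (hs01 (L ω)).1
  have hmass : ∫ ω, s (L ω) ∂μ = μ.real {ω | r < L ω} := by
    rw [hsq, measureReal_def, hrq, ENNReal.toReal_ofReal hq]
  exact ae_eq_threshold_of_integral_eq hLmeas hLint (hs.comp hLmeas).aestronglyMeasurable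
    (fun ω => hs01 (L ω))
    (measure_preimage_singleton_eq_zero_of_map_absolutelyContinuous hLmeas hLac r) hmass heq

/-- Almost-everywhere uniqueness of the D-optimal sampling function (scalar form):
if a sampling rule `s` with rate `q` attains the value `E[1_{L>r} L]` of the
hard-thresholding rule, then `s(L) = 1_{L > r}` almost surely. -/
theorem thresholding_unique {Ω : Type*} [MeasurableSpace Ω] (μ : Measure Ω)
    [IsProbabilityMeasure μ] (L : Ω → ℝ) (hLmeas : Measurable L)
    (hLnonneg : ∀ ω, 0 ≤ L ω) (hLint : Integrable L μ)
    (hLac : (μ.map L) ≪ (volume : Measure ℝ))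
    (q : ℝ) (hq : q ∈ Set.Ioo (0 : ℝ) 1) (r : ℝ)
    (hrq : μ {ω | r < L ω} = ENNReal.ofReal q)
    (s : ℝ → ℝ) (hs : Measurable s) (hs01 : ∀ x, s x ∈ Set.Icc (0 : ℝ) 1)
    (hsq : ∫ ω, s (L ω) ∂μ = q)
    (heq : ∫ ω, s (L ω) * L ω ∂μ = ∫ ω, (if r < L ω then L ω else 0) ∂μ) :
    ∀ᵐ ω ∂μ, s (L ω) = (if r < L ω then (1 : ℝ) else 0) :=
  thresholding_unique_general μ L hLmeas hLint hLac q r hrq s hs hs01 hsq heq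
end
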